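/- After inserting an edge (u,v) into G with core(v) ≤ core(u) (core numbers taken in the old graph), every node whose core number changes has old core number equal to core(v). -/
import Mathlib


variable {V : Type*} [Fintype V]

/-- The k-core of `G`, as the set of vertices contained in some subgraph
(vertex set) in which every vertex has at least `k` neighbors inside the set. -/
def coreSet (G : SimpleGraph V) (k : ℕ) : Set V :=
  {v | ∃ S : Set V, v ∈ S ∧ ∀ u ∈ S, k ≤ (S ∩ G.neighborSet u).ncard}

/-- The core number of `v`: the largest `k` such that `v` belongs to the `k`-core. -/
noncomputable def coreNumber (G : SimpleGraph V) (v : V) : ℕ :=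
  sSup {k | v ∈ coreSet G k}

lemma coreSet_anti (G : SimpleGraph V) {j k : ℕ} (h : j ≤ k) :
    coreSet G k ⊆ coreSet G j := by
  rintro w ⟨S, hwS, hS⟩
  exact ⟨S, hwS, fun x hx => h.trans (hS x hx)⟩

lemma bddAbove_core (G : SimpleGraph V) (v : V) :
    BddAbove {k | v ∈ coreSet G k} := by
  refine ⟨Fintype.card V, ?_⟩
  rintro k ⟨S, hvS, hS⟩
  calc k ≤ (S ∩ G.neighborSet v).ncard := hS v hvS
    _ ≤ (Set.univ : Set V).ncard := Set.ncard_le_ncard (Set.subset_univ _) (Set.toFinite _)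
    _ = Nat.card V := Set.ncard_univ V
    _ = Fintype.card V := Nat.card_eq_fintype_card

lemma zero_mem_core (G : SimpleGraph V) (v : V) : v ∈ coreSet G 0 :=
  ⟨{v}, rfl, fun _ _ => Nat.zero_le _⟩

lemma mem_coreSet_coreNumber (G : SimpleGraph V) (v : V) :
    v ∈ coreSet G (coreNumber G v) :=
  Nat.sSup_mem ⟨0, zero_mem_core G v⟩ (bddAbove_core G v)

lemma le_coreNumber (G : SimpleGraph V) {v : V} {k : ℕ} (h : v ∈ coreSet G k) :
    k ≤ coreNumber G v :=
  le_csSup (bddAbove_core G v) h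

theorem stmt6 (G : SimpleGraph V) (u v : V) (huv : u ≠ v) (hnadj : ¬ G.Adj u v)
    (hle : coreNumber G v ≤ coreNumber G u) :
    ∀ w : V, coreNumber (G ⊔ SimpleGraph.fromEdgeSet {s(u, v)}) w ≠ coreNumber G w →
      coreNumber G w = coreNumber G v := by
  intro w hne
  classical
  set G' := G ⊔ SimpleGraph.fromEdgeSet {s(u, v)} with hG'
  have hadj : ∀ x y : V, G'.Adj x y ↔ G.Adj x y ∨ (x = u ∧ y = v) ∨ (x = v ∧ y = u) := by
    intro x y
    constructor
    · rintro (h | h)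
      · exact Or.inl h
      · rw [SimpleGraph.fromEdgeSet_adj] at h
        obtain ⟨hs, hxy⟩ := h
        simp only [Set.mem_singleton_iff, Sym2.eq_iff] at hs
        tauto
    · rintro (h | ⟨rfl, rfl⟩ | ⟨rfl, rfl⟩)
      · exact Or.inl h
      · exact Or.inr (by simp [SimpleGraph.fromEdgeSet_adj, huv])
      · refine Or.inr ?_
        rw [SimpleGraph.fromEdgeSet_adj]
        exact ⟨by rw [Set.mem_singleton_iff, Sym2.eq_swap], huv.symm⟩
  have hmonoSet : ∀ k, coreSet G k ⊆ coreSet G' k := by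
    rintro k x ⟨S, hxS, hS⟩
    refine ⟨S, hxS, fun y hy => (hS y hy).trans (Set.ncard_le_ncard ?_ (Set.toFinite _))⟩
    exact Set.inter_subset_inter_right _ (fun z hz => (hadj y z).2 (Or.inl hz))
  have hmono : coreNumber G w ≤ coreNumber G' w :=
    le_coreNumber G' (hmonoSet _ (mem_coreSet_coreNumber G w))
  have hlt : coreNumber G w < coreNumber G' w :=
    lt_of_le_of_ne hmono (fun h => hne h.symm)
  set m := coreNumber G' w with hm
  obtain ⟨S, hwS, hS⟩ := mem_coreSet_coreNumber G' w
  by_cases hin : u ∈ S ∧ v ∈ S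
  · obtain ⟨huS, hvS⟩ := hin
    have key : ∀ x ∈ S, m - 1 ≤ (S ∩ G.neighborSet x).ncard := by
      intro x hx
      have hsub : S ∩ G'.neighborSet x ⊆
          insert (if x = u then v else u) (S ∩ G.neighborSet x) := by
        rintro y ⟨hyS, hadj'⟩
        rcases (hadj x y).1 hadj' with h | ⟨rfl, rfl⟩ | ⟨rfl, rfl⟩
        · exact Set.mem_insert_of_mem _ ⟨hyS, h⟩
        · simp
        · simp [huv.symm]
      have h1 := (hS x hx).trans (Set.ncard_le_ncard hsub (Set.toFinite _))
      have h2 := Set.ncard_insert_le (if x = u then v else u) (S ∩ G.neighborSet x)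
      omega
    have hw1 : m - 1 ≤ coreNumber G w := le_coreNumber G ⟨S, hwS, key⟩
    have hv1 : m - 1 ≤ coreNumber G v := le_coreNumber G ⟨S, hvS, key⟩
    by_cases hk : m ≤ coreNumber G v
    · exfalso
      have hu : m ≤ coreNumber G u := hk.trans hle
      obtain ⟨Tu, huTu, hTu⟩ := coreSet_anti G hu (mem_coreSet_coreNumber G u)
      obtain ⟨Tv, hvTv, hTv⟩ := coreSet_anti G hk (mem_coreSet_coreNumber G v)
      set W := S ∪ (Tu ∪ Tv) with hW
      have hSsub : S ⊆ W := Set.subset_union_left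
      have hTusub : Tu ⊆ W := fun z hz => Set.mem_union_right _ (Set.mem_union_left _ hz)
      have hTvsub : Tv ⊆ W := fun z hz => Set.mem_union_right _ (Set.mem_union_right _ hz)
      have hmon : ∀ (T : Set V), T ⊆ W → ∀ x : V,
          (T ∩ G.neighborSet x).ncard ≤ (W ∩ G.neighborSet x).ncard :=
        fun T hT x => Set.ncard_le_ncard (Set.inter_subset_inter_left _ hT) (Set.toFinite _)
      have hWit : ∀ x ∈ W, m ≤ (W ∩ G.neighborSet x).ncard := by
        intro x hx
        by_cases hxu : x = u
        · exact (hTu x (hxu ▸ huTu)).trans (hmon Tu hTusub x)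
        by_cases hxv : x = v
        · exact (hTv x (hxv ▸ hvTv)).trans (hmon Tv hTvsub x)
        rcases hx with hx | hx | hx
        · have heq : S ∩ G'.neighborSet x = S ∩ G.neighborSet x := by
            ext y
            simp only [Set.mem_inter_iff, SimpleGraph.mem_neighborSet]
            constructor
            · rintro ⟨hyS, hadj'⟩
              rcases (hadj x y).1 hadj' with h | ⟨rfl, rfl⟩ | ⟨rfl, rfl⟩
              · exact ⟨hyS, h⟩
              · exact absurd rfl hxu
              · exact absurd rfl hxv
            · rintro ⟨hyS, h⟩; exact ⟨hyS, (hadj x y).2 (Or.inl h)⟩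
          have hx' := hS x hx
          rw [heq] at hx'
          exact hx'.trans (hmon S hSsub x)
        · exact (hTu x hx).trans (hmon Tu hTusub x)
        · exact (hTv x hx).trans (hmon Tv hTvsub x)
      have : m ≤ coreNumber G w := le_coreNumber G ⟨W, hSsub hwS, hWit⟩
      omega
    · push_neg at hk
      omega
  · exfalso
    have key : ∀ x ∈ S, S ∩ G'.neighborSet x = S ∩ G.neighborSet x := by
      intro x hx
      ext y
      simp only [Set.mem_inter_iff, SimpleGraph.mem_neighborSet]
      constructor
      · rintro ⟨hyS, hadj'⟩
        rcases (hadj x y).1 hadj' with h | ⟨rfl, rfl⟩ | ⟨rfl, rfl⟩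
        · exact ⟨hyS, h⟩
        · exact absurd ⟨hx, hyS⟩ hin
        · exact absurd ⟨hyS, hx⟩ hin
      · rintro ⟨hyS, h⟩; exact ⟨hyS, (hadj x y).2 (Or.inl h)⟩
    have : m ≤ coreNumber G w :=
      le_coreNumber G ⟨S, hwS, fun x hx => by rw [← key x hx]; exact hS x hx⟩
    omega
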